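/- Characterization of Choquet-type traces: if a map φ from positive semidefinite n×n complex matrices to [0,∞) is monotone (for the Loewner order), unitarily invariant, positively homogeneous, and additive on f(a)+g(a) for all monotone increasing nonnegative functions f, g on the spectrum of each positive semidefinite a, then there exists a monotone increasing α : {0,...,n} → [0,∞) with α(0)=0 such that φ(a) = Σ_{i=1}^{n-1} (λ_i(a) − λ_{i+1}(a))α(i) + λₙ(a)α(n) for every positive semidefinite a. -/

import Mathlib

open Matrix BigOperators Finset
open scoped ComplexOrder

/-- The `i`-th largest eigenvalue (0-indexed) of a Hermitian matrix. -/
noncomputable def eigDesc {n : ℕ} (a : Matrix (Fin n) (Fin n) ℂ) (ha : a.IsHermitian) (i : Fin n) : ℝ :=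
  ha.eigenvalues (Tuple.sort ha.eigenvalues i.rev)

/-- Eigenvalues in decreasing order, extended by `0` beyond the size. `eigN a ha i = λ_{i+1}(a)`. -/
noncomputable def eigN {n : ℕ} (a : Matrix (Fin n) (Fin n) ℂ) (ha : a.IsHermitian) (i : ℕ) : ℝ :=
  if h : i < n then eigDesc a ha ⟨i, h⟩ else 0

/-- The non-linear trace of Choquet type:
`φ_α(a) = ∑_{i=1}^{n-1} (λ_i(a) - λ_{i+1}(a)) α(i) + λ_n(a) α(n)`. -/
noncomputable def choquetTrace {n : ℕ} (α : ℕ → ℝ) (a : Matrix (Fin n) (Fin n) ℂ)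
    (ha : a.IsHermitian) : ℝ :=
  ∑ i ∈ Finset.range n, (eigN a ha i - eigN a ha (i + 1)) * α (i + 1)

/-- Functional calculus of a Hermitian matrix `a` by a function `f : ℝ → ℝ` on its eigenvalues. -/
noncomputable def funCalc {n : ℕ} (f : ℝ → ℝ) (a : Matrix (Fin n) (Fin n) ℂ)
    (ha : a.IsHermitian) : Matrix (Fin n) (Fin n) ℂ :=
  (ha.eigenvectorUnitary : Matrix (Fin n) (Fin n) ℂ) *
    Matrix.diagonal (fun i => (f (ha.eigenvalues i) : ℂ)) *
    star (ha.eigenvectorUnitary : Matrix (Fin n) (Fin n) ℂ)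

/-- The absolute value `|a| = (a^* a)^{1/2}` of a matrix. -/
noncomputable def matAbs {n : ℕ} (a : Matrix (Fin n) (Fin n) ℂ) : Matrix (Fin n) (Fin n) ℂ :=
  ((Matrix.posSemidef_conjTranspose_mul_self a).1.eigenvectorUnitary : Matrix (Fin n) (Fin n) ℂ) *
    Matrix.diagonal ((↑) ∘ (fun x => √x) ∘ (Matrix.posSemidef_conjTranspose_mul_self a).1.eigenvalues) *
    (star (Matrix.posSemidef_conjTranspose_mul_self a).1.eigenvectorUnitary : Matrix (Fin n) (Fin n) ℂ)

theorem matAbs_isHermitian {n : ℕ} (a : Matrix (Fin n) (Fin n) ℂ) : (matAbs a).IsHermitian := by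
  unfold matAbs
  rw [Matrix.star_eq_conjTranspose]
  exact Matrix.isHermitian_mul_mul_conjTranspose _
    (Matrix.isHermitian_diagonal_of_self_adjoint _ (by ext i; simp))

/-!
Sort the spectrum of `a` decreasingly as `λ₁ ≥ ⋯ ≥ λₙ ≥ λₙ₊₁ := 0`. On the spectrum, the identity
is the layer-cake sum `x = ∑ᵢ (λᵢ - λᵢ₊₁) · 𝟙[λᵢ ≤ x]` of nonnegative increasing functions, so
additivity and homogeneity give `φ a = ∑ᵢ (λᵢ - λᵢ₊₁) φ(𝟙[λᵢ ≤ a])`. When `λᵢ₊₁ < λᵢ`, the spectral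
projection `𝟙[λᵢ ≤ a]` is unitarily conjugate to the projection onto the first `i` coordinates,
so `α i` is the value of `φ` on that projection.
-/

theorem Antitone.le_apply_iff_lt_succ {α : Type*} [Preorder α] {m : ℕ → α} (hm : Antitone m)
    {i : ℕ} (h : m (i + 1) < m i) (j : ℕ) : m i ≤ m j ↔ j < i + 1 := by
  refine ⟨fun hij => ?_, fun hji => hm (Nat.lt_succ_iff.mp hji)⟩
  by_contra! hji
  exact h.not_ge (hij.trans (hm hji))

theorem Antitone.sum_range_sub_mul_ite_le {m : ℕ → ℝ} (hm : Antitone m) {n j : ℕ} (hj : j ≤ n) :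
    ∑ i ∈ range n, (m i - m (i + 1)) * (if m i ≤ m j then 1 else 0) = m j - m n := by
  have hterm : ∀ i, (m i - m (i + 1)) * (if m i ≤ m j then 1 else 0) =
      m (max i j) - m (max (i + 1) j) := by
    intro i
    rcases le_or_gt j i with hji | hij
    · rw [if_pos (hm hji), max_eq_left hji, max_eq_left (hji.trans i.le_succ), mul_one]
    · rw [max_eq_right hij.le, max_eq_right hij, sub_self]
      split_ifs with h
      · rw [le_antisymm (hm i.le_succ) (h.trans (hm hij)), sub_self, zero_mul]
      · rw [mul_zero]
  rw [sum_congr rfl fun i _ => hterm i, sum_range_sub', max_eq_right j.zero_le, max_eq_left hj]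

namespace Matrix

section Permutation

variable {ι R : Type*} [Fintype ι] [DecidableEq ι] [CommRing R] [StarRing R]

theorem permMatrix_mem_unitaryGroup (σ : Equiv.Perm ι) :
    σ.permMatrix R ∈ unitaryGroup ι R := by
  rw [mem_unitaryGroup_iff, star_eq_conjTranspose, conjTranspose_permMatrix, ← permMatrix_mul,
    inv_mul_cancel, permMatrix_one]

theorem permMatrix_mul_diagonal_mul_star (σ : Equiv.Perm ι) (d : ι → R) :
    σ.permMatrix R * diagonal d * star (σ.permMatrix R) = diagonal (d ∘ σ) := by
  rw [star_eq_conjTranspose, conjTranspose_permMatrix, PEquiv.toMatrix_toPEquiv_mul,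
    PEquiv.mul_toMatrix_toPEquiv, submatrix_submatrix, Equiv.Perm.inv_def, Equiv.symm_symm]
  exact submatrix_diagonal_equiv d σ

end Permutation

end Matrix

section Spectrum

variable {n : ℕ} {a : Matrix (Fin n) (Fin n) ℂ}

theorem eigN_of_le (ha : a.IsHermitian) {i : ℕ} (hi : n ≤ i) : eigN a ha i = 0 :=
  dif_neg hi.not_gt

theorem eigN_nonneg (ha : a.PosSemidef) (i : ℕ) : 0 ≤ eigN a ha.1 i := by
  unfold eigN
  split
  · exact ha.eigenvalues_nonneg _
  · exact le_rfl

theorem eigN_antitone (ha : a.PosSemidef) : Antitone (eigN a ha.1) := by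
  intro i j hij
  by_cases hj : j < n
  · rw [eigN, dif_pos hj, eigN, dif_pos (hij.trans_lt hj)]
    exact Tuple.monotone_sort ha.1.eigenvalues (Fin.rev_le_rev.mpr hij)
  · rw [eigN_of_le ha.1 (not_lt.mp hj)]
    exact eigN_nonneg ha i

theorem funCalc_smul (c : ℝ) (f : ℝ → ℝ) (ha : a.IsHermitian) :
    funCalc (fun x => c * f x) a ha = c • funCalc f a ha := by
  have hd : (fun i => ((c * f (ha.eigenvalues i) : ℝ) : ℂ)) =
      c • fun i => ((f (ha.eigenvalues i) : ℝ) : ℂ) := by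
    funext i
    simp [Complex.real_smul]
  rw [funCalc, funCalc, hd, diagonal_smul, mul_smul_comm, smul_mul_assoc]

theorem funCalc_add (f g : ℝ → ℝ) (ha : a.IsHermitian) :
    funCalc (fun x => f x + g x) a ha = funCalc f a ha + funCalc g a ha := by
  simp only [funCalc, Complex.ofReal_add, ← diagonal_add, mul_add, add_mul]

theorem funCalc_id (ha : a.IsHermitian) : funCalc (fun x => x) a ha = a :=
  ha.spectral_theorem.symm

theorem funCalc_posSemidef {f : ℝ → ℝ} (ha : a.IsHermitian)
    (hf : ∀ i, 0 ≤ f (ha.eigenvalues i)) :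
    (funCalc f a ha).PosSemidef := by
  have hd : (diagonal fun i => ((f (ha.eigenvalues i) : ℝ) : ℂ)).PosSemidef :=
    posSemidef_diagonal_iff.mpr fun i => mod_cast hf i
  simpa [funCalc, star_eq_conjTranspose] using
    hd.mul_mul_conjTranspose_same (ha.eigenvectorUnitary : Matrix (Fin n) (Fin n) ℂ)

theorem exists_funCalc_eq_conj_diagonal_eigN (ha : a.IsHermitian) :
    ∃ u : unitaryGroup (Fin n) ℂ, ∀ f : ℝ → ℝ, funCalc f a ha =
      (u : Matrix (Fin n) (Fin n) ℂ) * diagonal (fun j : Fin n => (f (eigN a ha j) : ℂ)) *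
        star (u : Matrix (Fin n) (Fin n) ℂ) := by
  set σ : Equiv.Perm (Fin n) := Fin.revPerm.trans (Tuple.sort ha.eigenvalues)
  have hσ : ∀ j : Fin n, ha.eigenvalues (σ j) = eigN a ha j := fun j => by
    simp [σ, eigN, eigDesc]
  refine ⟨ha.eigenvectorUnitary * ⟨_, permMatrix_mem_unitaryGroup σ⁻¹⟩, fun f => ?_⟩
  have hdiag := permMatrix_mul_diagonal_mul_star σ⁻¹ fun j => (f (eigN a ha j) : ℂ)
  have hcomp : ((fun j : Fin n => (f (eigN a ha j) : ℂ)) ∘ ⇑σ⁻¹) =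
      fun i => (f (ha.eigenvalues i) : ℂ) := funext fun i => by
    simp [← hσ]
  rw [hcomp] at hdiag
  simp only [funCalc, ← hdiag, UnitaryGroup.mul_val, star_mul, mul_assoc]

end Spectrum

section Projections

variable {n : ℕ}

noncomputable def projFirst (n k : ℕ) : Matrix (Fin n) (Fin n) ℂ :=
  diagonal fun j => if (j : ℕ) < k then 1 else 0

theorem projFirst_zero : projFirst n 0 = 0 := by
  simp [projFirst]

theorem projFirst_posSemidef (k : ℕ) : (projFirst n k).PosSemidef :=
  posSemidef_diagonal_iff.mpr fun j => by split_ifs <;> simp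

theorem projFirst_sub_projFirst_posSemidef {k l : ℕ} (hkl : k ≤ l) :
    (projFirst n l - projFirst n k).PosSemidef := by
  rw [projFirst, projFirst, diagonal_sub]
  refine posSemidef_diagonal_iff.mpr fun j => ?_
  by_cases hk : (j : ℕ) < k
  · simp [hk, hk.trans_le hkl]
  · by_cases hl : (j : ℕ) < l <;> simp [hk, hl]

end Projections

section Layers

variable {n : ℕ} {a : Matrix (Fin n) (Fin n) ℂ}

noncomputable def eigLayer (ha : a.IsHermitian) (i : ℕ) (x : ℝ) : ℝ :=
  (eigN a ha i - eigN a ha (i + 1)) * if eigN a ha i ≤ x then 1 else 0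

theorem eigLayer_nonneg (ha : a.PosSemidef) (i : ℕ) (x : ℝ) : 0 ≤ eigLayer ha.1 i x :=
  mul_nonneg (sub_nonneg.mpr (eigN_antitone ha i.le_succ)) (by split_ifs <;> norm_num)

theorem eigLayer_monotone (ha : a.PosSemidef) (i : ℕ) : Monotone (eigLayer ha.1 i) := by
  intro x y hxy
  refine mul_le_mul_of_nonneg_left ?_ (sub_nonneg.mpr (eigN_antitone ha i.le_succ))
  split_ifs with hx hy
  · exact le_rfl
  · exact absurd (hx.trans hxy) hy
  · exact zero_le_one
  · exact le_rfl

theorem funCalc_sum_eigLayer (ha : a.PosSemidef) :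
    funCalc (fun x => ∑ i ∈ range n, eigLayer ha.1 i x) a ha.1 = a := by
  obtain ⟨u, hu⟩ := exists_funCalc_eq_conj_diagonal_eigN ha.1
  conv_rhs => rw [← funCalc_id ha.1, hu]
  rw [hu]
  congr 3
  funext j
  simp only [eigLayer, (eigN_antitone ha).sum_range_sub_mul_ite_le j.isLt.le,
    eigN_of_le ha.1 le_rfl, sub_zero]

theorem exists_funCalc_ite_eq_conj_projFirst (ha : a.PosSemidef) {i : ℕ}
    (hi : eigN a ha.1 (i + 1) < eigN a ha.1 i) :
    ∃ u : unitaryGroup (Fin n) ℂ,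
      funCalc (fun x => if eigN a ha.1 i ≤ x then 1 else 0) a ha.1 =
        (u : Matrix (Fin n) (Fin n) ℂ) * projFirst n (i + 1) *
          star (u : Matrix (Fin n) (Fin n) ℂ) := by
  obtain ⟨u, hu⟩ := exists_funCalc_eq_conj_diagonal_eigN ha.1
  refine ⟨u, ?_⟩
  rw [hu, projFirst]
  congr 3
  funext j
  simp only [(eigN_antitone ha).le_apply_iff_lt_succ hi, apply_ite Complex.ofReal,
    Complex.ofReal_one, Complex.ofReal_zero]

end Layers

section Functional

variable {n : ℕ} {φ : Matrix (Fin n) (Fin n) ℂ → ℝ} {a : Matrix (Fin n) (Fin n) ℂ}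

theorem map_funCalc_sum (hφ0 : φ 0 = 0) (ha : a.IsHermitian)
    (hadd : ∀ f g : ℝ → ℝ,
      MonotoneOn f (Set.range ha.eigenvalues) → MonotoneOn g (Set.range ha.eigenvalues) →
      (∀ i, 0 ≤ f (ha.eigenvalues i)) → (∀ i, 0 ≤ g (ha.eigenvalues i)) →
      φ (funCalc f a ha + funCalc g a ha) = φ (funCalc f a ha) + φ (funCalc g a ha))
    (f : ℕ → ℝ → ℝ) (hf : ∀ i, Monotone (f i)) (hf0 : ∀ i x, 0 ≤ f i x) (k : ℕ) :
    φ (funCalc (fun x => ∑ i ∈ range k, f i x) a ha) =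
      ∑ i ∈ range k, φ (funCalc (f i) a ha) := by
  induction k with
  | zero => simp [funCalc, hφ0]
  | succ k ih =>
    have hsum : Monotone fun x => ∑ i ∈ range k, f i x := fun x y hxy =>
      sum_le_sum fun i _ => hf i hxy
    simp only [sum_range_succ]
    rw [funCalc_add, hadd _ _ (hsum.monotoneOn _) ((hf k).monotoneOn _)
      (fun _ => sum_nonneg fun i _ => hf0 i _) (fun _ => hf0 k _), ih]

theorem map_funCalc_eigLayer
    (hunit : ∀ a : Matrix (Fin n) (Fin n) ℂ, a.PosSemidef →
      ∀ u : unitaryGroup (Fin n) ℂ,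
        φ ((u : Matrix (Fin n) (Fin n) ℂ) * a * star (u : Matrix (Fin n) (Fin n) ℂ)) = φ a)
    (hhom : ∀ a : Matrix (Fin n) (Fin n) ℂ, a.PosSemidef →
      ∀ k : ℝ, 0 ≤ k → φ (k • a) = k * φ a)
    (ha : a.PosSemidef) (i : ℕ) :
    φ (funCalc (eigLayer ha.1 i) a ha.1) =
      (eigN a ha.1 i - eigN a ha.1 (i + 1)) * φ (projFirst n (i + 1)) := by
  have hgap : 0 ≤ eigN a ha.1 i - eigN a ha.1 (i + 1) :=
    sub_nonneg.mpr (eigN_antitone ha i.le_succ)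
  have hproj : (funCalc (fun x => if eigN a ha.1 i ≤ x then 1 else 0) a ha.1).PosSemidef :=
    funCalc_posSemidef ha.1 fun _ => by split_ifs <;> norm_num
  unfold eigLayer
  rw [funCalc_smul, hhom _ hproj _ hgap]
  rcases hgap.eq_or_lt with hzero | hpos
  · rw [← hzero, zero_mul, zero_mul]
  · obtain ⟨u, hu⟩ := exists_funCalc_ite_eq_conj_projFirst ha (sub_pos.mp hpos)
    rw [hu, hunit _ (projFirst_posSemidef _) u]

end Functional

theorem stmt5_general (n : ℕ) (φ : Matrix (Fin n) (Fin n) ℂ → ℝ)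
    (hmono : ∀ a b : Matrix (Fin n) (Fin n) ℂ,
      a.PosSemidef → b.PosSemidef → (b - a).PosSemidef → φ a ≤ φ b)
    (hunit : ∀ a : Matrix (Fin n) (Fin n) ℂ, a.PosSemidef →
      ∀ u : Matrix.unitaryGroup (Fin n) ℂ,
        φ ((u : Matrix (Fin n) (Fin n) ℂ) * a * star (u : Matrix (Fin n) (Fin n) ℂ)) = φ a)
    (hhom : ∀ a : Matrix (Fin n) (Fin n) ℂ, a.PosSemidef →
      ∀ k : ℝ, 0 ≤ k → φ (k • a) = k * φ a)
    (hadd : ∀ (a : Matrix (Fin n) (Fin n) ℂ) (ha : a.PosSemidef) (f g : ℝ → ℝ),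
      MonotoneOn f (Set.range ha.1.eigenvalues) → MonotoneOn g (Set.range ha.1.eigenvalues) →
      (∀ i, 0 ≤ f (ha.1.eigenvalues i)) → (∀ i, 0 ≤ g (ha.1.eigenvalues i)) →
      φ (funCalc f a ha.1 + funCalc g a ha.1) = φ (funCalc f a ha.1) + φ (funCalc g a ha.1)) :
    ∃ α : ℕ → ℝ, α 0 = 0 ∧ (∀ i j : ℕ, i ≤ j → j ≤ n → α i ≤ α j) ∧
      ∀ (a : Matrix (Fin n) (Fin n) ℂ) (ha : a.PosSemidef), φ a = choquetTrace α a ha.1 := by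
  have hφ0 : φ 0 = 0 := by simpa using hhom 0 .zero 0 le_rfl
  refine ⟨fun k => φ (projFirst n k), by simp only [projFirst_zero, hφ0],
    fun i j hij _ => hmono _ _ (projFirst_posSemidef i) (projFirst_posSemidef j)
      (projFirst_sub_projFirst_posSemidef hij), fun a ha => ?_⟩
  calc φ a = φ (funCalc (fun x => ∑ i ∈ range n, eigLayer ha.1 i x) a ha.1) :=
        (congrArg φ (funCalc_sum_eigLayer ha)).symm
    _ = ∑ i ∈ range n, φ (funCalc (eigLayer ha.1 i) a ha.1) :=
        map_funCalc_sum hφ0 ha.1 (hadd a ha) _ (eigLayer_monotone ha) (eigLayer_nonneg ha) n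
    _ = choquetTrace (fun k => φ (projFirst n k)) a ha.1 :=
        sum_congr rfl fun i _ => map_funCalc_eigLayer hunit hhom ha i

/-- characterization of Choquet-type traces by monotony, unitary invariance,
positive homogeneity and monotonic increasing additivity on the spectrum. -/
theorem stmt5 (n : ℕ) (φ : Matrix (Fin n) (Fin n) ℂ → ℝ)
    (hpos : ∀ a : Matrix (Fin n) (Fin n) ℂ, a.PosSemidef → 0 ≤ φ a)
    (hmono : ∀ a b : Matrix (Fin n) (Fin n) ℂ,
      a.PosSemidef → b.PosSemidef → (b - a).PosSemidef → φ a ≤ φ b)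
    (hunit : ∀ a : Matrix (Fin n) (Fin n) ℂ, a.PosSemidef →
      ∀ u : Matrix.unitaryGroup (Fin n) ℂ,
        φ ((u : Matrix (Fin n) (Fin n) ℂ) * a * star (u : Matrix (Fin n) (Fin n) ℂ)) = φ a)
    (hhom : ∀ a : Matrix (Fin n) (Fin n) ℂ, a.PosSemidef →
      ∀ k : ℝ, 0 ≤ k → φ (k • a) = k * φ a)
    (hadd : ∀ (a : Matrix (Fin n) (Fin n) ℂ) (ha : a.PosSemidef) (f g : ℝ → ℝ),
      MonotoneOn f (Set.range ha.1.eigenvalues) → MonotoneOn g (Set.range ha.1.eigenvalues) →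
      (∀ i, 0 ≤ f (ha.1.eigenvalues i)) → (∀ i, 0 ≤ g (ha.1.eigenvalues i)) →
      φ (funCalc f a ha.1 + funCalc g a ha.1) = φ (funCalc f a ha.1) + φ (funCalc g a ha.1)) :
    ∃ α : ℕ → ℝ, α 0 = 0 ∧ (∀ i j : ℕ, i ≤ j → j ≤ n → α i ≤ α j) ∧
      ∀ (a : Matrix (Fin n) (Fin n) ℂ) (ha : a.PosSemidef), φ a = choquetTrace α a ha.1 :=
  stmt5_general n φ hmono hunit hhom hadd
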